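/- For j, n, m ≥ 3, the size Ramsey multipartite number satisfies m_j(S_n, S_m) ≤ ⌈(n+m-3)/(j-1)⌉. -/

import Mathlib

/-!
Every vertex of `K_{j×s}` has degree `(j - 1) s`, and at each vertex this degree splits into
its red and its blue degree. Once `(j - 1) s ≥ n + m - 3`, a vertex of red degree at most
`n - 2` therefore has blue degree at least `m - 1`.
-/

/-- The complete balanced multipartite graph `K_{j×s}` on `Fin j × Fin s`:
vertices are adjacent iff they lie in different parts (different first coordinate). -/
def multiK (j s : ℕ) : SimpleGraph (Fin j × Fin s) where
  Adj u v := u.1 ≠ v.1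
  symm := ⟨by intro _ _ h; exact h.symm⟩
  loopless := ⟨by intro _ h; exact h rfl⟩

/-- Degree of a vertex, via `Set.ncard` of its neighbor set. -/
noncomputable def mdeg {V : Type*} (G : SimpleGraph V) (v : V) : ℕ :=
  (G.neighborSet v).ncard

/-- `K_{j×s} → (S_n, S_m)`: every red/blue edge coloring (red subgraph `R ≤ K_{j×s}`,
blue the rest) contains a red `K_{1,n-1}` or a blue `K_{1,m-1}`. -/
def Arrows (j s n m : ℕ) : Prop :=
  ∀ R : SimpleGraph (Fin j × Fin s), R ≤ multiK j s →
    (∃ v, n - 1 ≤ mdeg R v) ∨ (∃ v, m - 1 ≤ mdeg (multiK j s \ R) v)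

/-- The size Ramsey multipartite number `m_j(S_n, S_m)`. -/
noncomputable def mj (j n m : ℕ) : ℕ := sInf {s | Arrows j s n m}

lemma mdeg_sdiff_add_mdeg {V : Type*} {G R : SimpleGraph V} (hR : R ≤ G) {v : V}
    (hv : (G.neighborSet v).Finite) :
    mdeg (G \ R) v + mdeg R v = mdeg G v := by
  rw [mdeg, mdeg, mdeg, SimpleGraph.neighborSet_sdiff]
  exact Set.ncard_sdiff_add_ncard_of_subset (fun _ h ↦ hR h) hv

lemma mdeg_multiK (j s : ℕ) (v : Fin j × Fin s) :
    mdeg (multiK j s) v = (j - 1) * s := by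
  have hnbr : (multiK j s).neighborSet v = ({v.1}ᶜ : Set (Fin j)) ×ˢ Set.univ := by
    ext u
    simp [multiK, SimpleGraph.neighborSet, eq_comm]
  rw [mdeg, hnbr, Set.ncard_prod, Set.ncard_compl, Set.ncard_singleton, Set.ncard_univ,
    Nat.card_fin, Nat.card_fin]

lemma arrows_of_add_le_mul {j s n m : ℕ} (hj : 0 < j) (hs : 0 < s)
    (h : n + m ≤ (j - 1) * s + 3) : Arrows j s n m := by
  intro R hR
  let v : Fin j × Fin s := (⟨0, hj⟩, ⟨0, hs⟩)
  have hsplit : mdeg (multiK j s \ R) v + mdeg R v = (j - 1) * s := by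
    rw [mdeg_sdiff_add_mdeg hR (Set.toFinite _), mdeg_multiK]
  by_cases hred : n - 1 ≤ mdeg R v
  · exact Or.inl ⟨v, hred⟩
  · exact Or.inr ⟨v, by omega⟩

theorem stmt10 (j n m : ℕ) (hj : 3 ≤ j) (hn : 3 ≤ n) (hm : 3 ≤ m) :
    mj j n m ≤ (n + m - 3) ⌈/⌉ (j - 1) := by
  have hj₁ : 0 < j - 1 := by omega
  have hcover : n + m - 3 ≤ (j - 1) * ((n + m - 3) ⌈/⌉ (j - 1)) := le_smul_ceilDiv hj₁
  have hs : 0 < (n + m - 3) ⌈/⌉ (j - 1) := Nat.pos_of_ne_zero fun h0 ↦ by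
    rw [h0, Nat.mul_zero] at hcover
    omega
  exact Nat.sInf_le (arrows_of_add_le_mul (by omega) hs (by omega))
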